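/- The multiplier algebra M(T_β, λ) — the set of symbols φ̂ : ℕ₀ → ℂ with dom(M_φ̂) = ℓ²(β), normed by ‖φ̂‖ = ‖M_φ̂‖ and with the Cauchy product as multiplication — is a commutative unital Banach algebra. In particular, M(T_β, λ) is complete: if {φ̂_n} is a Cauchy sequence of multipliers then there exists a multiplier ψ̂ with ‖M_ψ̂ − M_{φ̂_n}‖ → 0. -/
import Mathlib


open scoped ENNReal
open Filter

noncomputable section

/-- Membership in the weighted ℓ² space ℓ²(β). -/
def MemL2 {V : Type*} (β : V → ℝ) (f : V → ℂ) : Prop :=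
  Summable fun v => β v * ‖f v‖ ^ 2

/-- The squared norm in ℓ²(β). -/
noncomputable def wnormSq {V : Type*} (β : V → ℝ) (f : V → ℂ) : ℝ :=
  ∑' v, β v * ‖f v‖ ^ 2

/-- The inner product of ℓ²(β). -/
noncomputable def winner {V : Type*} (β : V → ℝ) (f g : V → ℂ) : ℂ :=
  ∑' v, f v * (starRingEnd ℂ) (g v) * (β v : ℂ)

/-- The indicator (basis) vector e_u. -/
def eVec {V : Type*} [DecidableEq V] (u : V) : V → ℂ :=
  fun v => if v = u then 1 else 0

/-- The formal weighted-shift map Λ with complex weights. -/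
def shiftMap {V : Type*} [DecidableEq V] (root : V) (par : V → V) (lam : V → ℂ)
    (f : V → ℂ) : V → ℂ :=
  fun v => if v = root then 0 else lam v * f (par v)

/-- The formal weighted-shift map Λ with positive real weights. -/
def shiftMapR {V : Type*} [DecidableEq V] (root : V) (par : V → V) (lam : V → ℝ)
    (f : V → ℂ) : V → ℂ :=
  fun v => if v = root then 0 else (lam v : ℂ) * f (par v)

/-- λ_{par^k(v)|v} : the product of the weights along the path from par^k(v) to v. -/
noncomputable def lamProd {V : Type*} (par : V → V) (lam : V → ℝ) (k : ℕ) (v : V) : ℝ :=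
  ∏ j ∈ Finset.range k, lam (par^[j] v)

/-- The formal multiplication map Γ_φ̂. -/
noncomputable def gammaMap {V : Type*} (par : V → V) (depth : V → ℕ) (lam : V → ℝ)
    (φ : ℕ → ℂ) (f : V → ℂ) : V → ℂ :=
  fun v => ∑ k ∈ Finset.range (depth v + 1),
    ((lamProd par lam k v : ℝ) : ℂ) * φ k * f (par^[k] v)

/-- φ̂ is a multiplier: the multiplication operator M_φ̂ is everywhere defined on ℓ²(β). -/
def Mult {V : Type*} (par : V → V) (depth : V → ℕ) (β lam : V → ℝ) (φ : ℕ → ℂ) : Prop :=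
  ∀ f : V → ℂ, MemL2 β f → MemL2 β (gammaMap par depth lam φ f)

/-- The operator norm (w.r.t. ℓ²(β)) of a formal map T. -/
noncomputable def opNorm {V : Type*} (β : V → ℝ) (T : (V → ℂ) → (V → ℂ)) : ℝ :=
  sInf {C : ℝ | 0 ≤ C ∧ ∀ f : V → ℂ, MemL2 β f →
    wnormSq β (T f) ≤ C ^ 2 * wnormSq β f}

/-- Cauchy product of symbols. -/
def cauchyMul (φ ψ : ℕ → ℂ) : ℕ → ℂ :=
  fun k => ∑ j ∈ Finset.range (k + 1), φ j * ψ (k - j)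

/-- The spectral radius of the weighted shift, via the Gelfand formula. -/
noncomputable def specRad {V : Type*} [DecidableEq V] (root : V) (par : V → V)
    (β lam : V → ℝ) : ℝ :=
  ⨅ n : ℕ, (opNorm β (fun f => (shiftMapR root par lam)^[n + 1] f)) ^ ((1 : ℝ) / ((n : ℝ) + 1))

/-- The explicit formula for the adjoint S_λ^* of the weighted shift. -/
noncomputable def SStar {V : Type*} [DecidableEq V] (root : V) (par : V → V)
    (β lam : V → ℝ) (g : V → ℂ) : V → ℂ :=
  fun u => ∑' v : {v : V // v ≠ root ∧ par v = u}, ((lam v.1 * (β v.1 / β u) : ℝ) : ℂ) * g v.1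

/-- p : ℕ → V enumerates a path of the directed tree. -/
def IsPath {V : Type*} (root : V) (par : V → V) (p : ℕ → V) : Prop :=
  p 0 = root ∧ ∀ k, par (p (k + 1)) = p k ∧ p (k + 1) ≠ root

/-- r₂^P(S_λ) for a path p. -/
noncomputable def r2P {V : Type*} (β lam : V → ℝ) (p : ℕ → V) : ℝ :=
  Filter.liminf
    (fun k : ℕ => (Real.sqrt (β (p k)) * ∏ j ∈ Finset.range k, lam (p (j + 1))) ^ ((1 : ℝ) / (k : ℝ)))
    Filter.atTop

/-- r₂⁺(S_λ) : the supremum of r₂^P(S_λ) over all paths. -/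
noncomputable def r2plus {V : Type*} (root : V) (par : V → V) (β lam : V → ℝ) : ℝ :=
  sSup {r : ℝ | ∃ p : ℕ → V, IsPath root par p ∧ r = r2P β lam p}

section Stmt7Aux

variable {V : Type*} [DecidableEq V]

/-- conjugation down (divide by √β). -/
noncomputable def dnF (β : V → ℝ) (g : V → ℂ) : V → ℂ :=
  fun v => g v / (Real.sqrt (β v) : ℂ)

/-- conjugation up (multiply by √β). -/
noncomputable def upF (β : V → ℝ) (f : V → ℂ) : V → ℂ :=
  fun v => (Real.sqrt (β v) : ℂ) * f v

variable {β : V → ℝ}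

lemma rpow_tR2 (x : ℝ) : x ^ (2:ℝ≥0∞).toReal = x ^ 2 := by
  rw [ENNReal.toReal_ofNat, show ((2:ℝ)) = ((2:ℕ):ℝ) by norm_num, Real.rpow_natCast]

lemma sqrt_ne (hβ : ∀ v, 0 < β v) (v : V) : ((Real.sqrt (β v) : ℝ) : ℂ) ≠ 0 := by
  simpa using (Real.sqrt_pos.2 (hβ v)).ne'

lemma up_dn (hβ : ∀ v, 0 < β v) (g : V → ℂ) : upF β (dnF β g) = g := by
  funext v
  simp only [upF, dnF]
  rw [mul_comm, div_mul_cancel₀ _ (sqrt_ne hβ v)]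

lemma dn_up (hβ : ∀ v, 0 < β v) (f : V → ℂ) : dnF β (upF β f) = f := by
  funext v
  simp only [upF, dnF]
  rw [mul_comm, mul_div_assoc, div_self (sqrt_ne hβ v), mul_one]

lemma normsq_up (hβ : ∀ v, 0 < β v) (f : V → ℂ) (v : V) :
    ‖upF β f v‖ ^ 2 = β v * ‖f v‖ ^ 2 := by
  simp only [upF, norm_mul, Complex.norm_real, Real.norm_eq_abs,
    abs_of_nonneg (Real.sqrt_nonneg _), mul_pow]
  rw [Real.sq_sqrt (hβ v).le]

lemma memℓp_two_iff (f : V → ℂ) :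
    Memℓp f 2 ↔ Summable fun v => ‖f v‖ ^ 2 := by
  rw [memℓp_gen_iff (by norm_num : 0 < (2:ℝ≥0∞).toReal)]
  exact summable_congr fun v => rpow_tR2 _

lemma memL2_iff (hβ : ∀ v, 0 < β v) (f : V → ℂ) : MemL2 β f ↔ Memℓp (upF β f) 2 := by
  rw [memℓp_two_iff, MemL2]
  exact summable_congr fun v => (normsq_up hβ f v).symm

lemma wnormSq_eq (hβ : ∀ v, 0 < β v) (f : V → ℂ) :
    wnormSq β f = ∑' v, ‖upF β f v‖ ^ 2 := by
  unfold wnormSq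
  exact tsum_congr fun v => (normsq_up hβ f v).symm

lemma lp_norm_sq (g : lp (fun _ : V => ℂ) 2) :
    ‖g‖ ^ 2 = ∑' v, ‖(g : ∀ _ : V, ℂ) v‖ ^ 2 := by
  have := lp.norm_rpow_eq_tsum (by norm_num : 0 < (2:ℝ≥0∞).toReal) g
  rw [rpow_tR2] at this
  rw [this]
  exact tsum_congr fun v => rpow_tR2 _

end Stmt7Aux
section Stmt7Aux2
set_option linter.unusedSectionVars false
set_option maxHeartbeats 1000000
variable {V : Type*} [DecidableEq V]
variable (root : V) (par : V → V) (depth : V → ℕ) (lam : V → ℝ)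

lemma gammaMap_symbol_sub (φ ψ : ℕ → ℂ) (f : V → ℂ) :
    gammaMap par depth lam (fun k => φ k - ψ k) f =
      fun v => gammaMap par depth lam φ f v - gammaMap par depth lam ψ f v := by
  funext v
  simp [gammaMap, ← Finset.sum_sub_distrib, sub_mul, mul_sub]

lemma gammaMap_fun_add (φ : ℕ → ℂ) (f g : V → ℂ) :
    gammaMap par depth lam φ (f + g) =
      gammaMap par depth lam φ f + gammaMap par depth lam φ g := by
  funext v
  simp [gammaMap, ← Finset.sum_add_distrib, mul_add]

lemma gammaMap_fun_smul (φ : ℕ → ℂ) (c : ℂ) (f : V → ℂ) :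
    gammaMap par depth lam φ (c • f) = c • gammaMap par depth lam φ f := by
  funext v
  simp only [gammaMap, Pi.smul_apply, smul_eq_mul, Finset.mul_sum]
  exact Finset.sum_congr rfl fun k _ => by ring

lemma gammaMap_one (f : V → ℂ) :
    gammaMap par depth lam (fun k => if k = 0 then 1 else 0) f = f := by
  funext v
  unfold gammaMap
  rw [Finset.sum_eq_single_of_mem 0 (by simp)]
  · simp [lamProd]
  · intro k _ hk
    simp [hk]

variable (hdepth0 : depth root = 0)
  (hdepth : ∀ v, v ≠ root → depth v = depth (par v) + 1)

include hdepth0 hdepth in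
lemma depth_iterate : ∀ (k : ℕ) (v : V), k ≤ depth v → depth (par^[k] v) = depth v - k := by
  intro k
  induction k with
  | zero => simp
  | succ k ih =>
    intro v hk
    have hk' : k ≤ depth v := by omega
    have h1 : depth (par^[k] v) = depth v - k := ih v hk'
    have hne : par^[k] v ≠ root := by
      intro h
      rw [h, hdepth0] at h1
      omega
    have := hdepth _ hne
    rw [Function.iterate_succ_apply']
    omega

include hdepth0 hdepth in
lemma iterate_root_unique {k : ℕ} {v : V} (hk : k ≤ depth v) (h : par^[k] v = root) :
    k = depth v := by
  have := depth_iterate root par depth hdepth0 hdepth k v hk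
  rw [h, hdepth0] at this
  omega

include hdepth0 hdepth in
lemma iterate_ne_root {k : ℕ} {v : V} (hk : k < depth v) : par^[k] v ≠ root := by
  intro h
  have := iterate_root_unique root par depth hdepth0 hdepth (le_of_lt hk) h
  omega

include hdepth0 hdepth in
lemma lamProd_pos (hlam : ∀ v, v ≠ root → 0 < lam v) {k : ℕ} {v : V} (hk : k ≤ depth v) :
    0 < lamProd par lam k v := by
  unfold lamProd
  apply Finset.prod_pos
  intro j hj
  rw [Finset.mem_range] at hj
  exact hlam _ (iterate_ne_root root par depth hdepth0 hdepth (by omega))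

lemma lamProd_add (k j : ℕ) (v : V) :
    lamProd par lam (k + j) v = lamProd par lam k v * lamProd par lam j (par^[k] v) := by
  unfold lamProd
  rw [Finset.prod_range_add]
  congr 1
  refine Finset.prod_congr rfl fun i _ => ?_
  rw [add_comm k i, Function.iterate_add_apply]

include hdepth0 hdepth in
lemma gammaMap_comp (φ ψ : ℕ → ℂ) (f : V → ℂ) :
    gammaMap par depth lam (cauchyMul φ ψ) f =
      gammaMap par depth lam φ (gammaMap par depth lam ψ f) := by
  funext v
  unfold gammaMap cauchyMul
  set d := depth v with hd
  have hR : ∀ k ∈ Finset.range (d + 1),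
      (((lamProd par lam k v : ℝ) : ℂ) * φ k *
        (∑ j ∈ Finset.range (depth (par^[k] v) + 1),
          ((lamProd par lam j (par^[k] v) : ℝ) : ℂ) * ψ j * f (par^[j] (par^[k] v))))
      = ∑ j ∈ Finset.range (d - k + 1),
          ((lamProd par lam (k + j) v : ℝ) : ℂ) * (φ k * ψ j) * f (par^[k + j] v) := by
    intro k hk
    rw [Finset.mem_range] at hk
    have hk' : k ≤ d := by omega
    rw [depth_iterate root par depth hdepth0 hdepth k v hk', Finset.mul_sum]
    refine Finset.sum_congr rfl fun j hj => ?_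
    rw [lamProd_add, add_comm k j, Function.iterate_add_apply]
    push_cast
    ring
  have hL : ∀ m ∈ Finset.range (d + 1),
      ((lamProd par lam m v : ℝ) : ℂ) *
          (∑ j ∈ Finset.range (m + 1), φ j * ψ (m - j)) * f (par^[m] v)
      = ∑ j ∈ Finset.range (m + 1),
          ((lamProd par lam m v : ℝ) : ℂ) * (φ j * ψ (m - j)) * f (par^[m] v) := by
    intro m _
    rw [Finset.mul_sum, Finset.sum_mul]
  rw [Finset.sum_congr rfl hL, Finset.sum_congr rfl hR,
    Finset.sum_sigma' (Finset.range (d+1)) (fun m => Finset.range (m+1)),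
    Finset.sum_sigma' (Finset.range (d+1)) (fun k => Finset.range (d - k + 1))]
  refine Finset.sum_nbij'
    (fun x : Σ _ : ℕ, ℕ => (⟨x.2, x.1 - x.2⟩ : Σ _ : ℕ, ℕ))
    (fun y : Σ _ : ℕ, ℕ => (⟨y.1 + y.2, y.1⟩ : Σ _ : ℕ, ℕ)) ?_ ?_ ?_ ?_ ?_
  · rintro ⟨m, j⟩ hx
    simp only [Finset.mem_sigma, Finset.mem_range] at hx ⊢
    omega
  · rintro ⟨k, j⟩ hy
    simp only [Finset.mem_sigma, Finset.mem_range] at hy ⊢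
    omega
  · rintro ⟨m, j⟩ hx
    simp only [Finset.mem_sigma, Finset.mem_range] at hx
    have : j + (m - j) = m := by omega
    simp [this]
  · rintro ⟨k, j⟩ hy
    simp only [Finset.mem_sigma, Finset.mem_range] at hy
    have : k + j - k = j := by omega
    simp [this]
  · rintro ⟨m, j⟩ hx
    simp only [Finset.mem_sigma, Finset.mem_range] at hx
    have hmj : j + (m - j) = m := by omega
    simp only []
    rw [hmj]

end Stmt7Aux2
section Stmt7Aux3
set_option linter.unusedSectionVars false
set_option maxHeartbeats 1000000
variable {V : Type*} [DecidableEq V]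
variable (par : V → V) (depth : V → ℕ) (β lam : V → ℝ)

/-- `L` represents the multiplication operator with symbol `φ` on `ℓ²(V)`. -/
def RepOp (φ : ℕ → ℂ) (L : lp (fun _ : V => ℂ) 2 →L[ℂ] lp (fun _ : V => ℂ) 2) : Prop :=
  ∀ g : lp (fun _ : V => ℂ) 2,
    (L g : ∀ _ : V, ℂ) = upF β (gammaMap par depth lam φ (dnF β (g : ∀ _ : V, ℂ)))

variable (hβ : ∀ v, 0 < β v)

include hβ in
lemma mult_of_rep {φ : ℕ → ℂ} {L : lp (fun _ : V => ℂ) 2 →L[ℂ] lp (fun _ : V => ℂ) 2}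
    (hL : RepOp par depth β lam φ L) : Mult par depth β lam φ := by
  intro f hf
  have hmem : Memℓp (upF β f) 2 := (memL2_iff hβ f).1 hf
  set g : lp (fun _ : V => ℂ) 2 := ⟨upF β f, hmem⟩
  have hcoe : (g : ∀ _ : V, ℂ) = upF β f := rfl
  have h2 := hL g
  rw [hcoe, dn_up hβ] at h2
  have := lp.memℓp (L g)
  rw [h2] at this
  exact (memL2_iff hβ _).2 this

lemma wnormSq_nonneg (hβ : ∀ v, 0 < β v) (f : V → ℂ) : 0 ≤ wnormSq β f :=
  tsum_nonneg fun v => mul_nonneg (hβ v).le (sq_nonneg _)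

lemma le_of_sq_le_sq' {a b : ℝ} (ha : 0 ≤ a) (hb : 0 ≤ b) (h : a ^ 2 ≤ b ^ 2) : a ≤ b := by
  nlinarith

include hβ in
lemma isLeast_rep {φ : ℕ → ℂ} {L : lp (fun _ : V => ℂ) 2 →L[ℂ] lp (fun _ : V => ℂ) 2}
    (hL : RepOp par depth β lam φ L) :
    IsLeast {C : ℝ | 0 ≤ C ∧ ∀ f : V → ℂ, MemL2 β f →
      wnormSq β (gammaMap par depth lam φ f) ≤ C ^ 2 * wnormSq β f} ‖L‖ := by
  constructor
  · refine ⟨norm_nonneg _, fun f hf => ?_⟩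
    have hmem : Memℓp (upF β f) 2 := (memL2_iff hβ f).1 hf
    set g : lp (fun _ : V => ℂ) 2 := ⟨upF β f, hmem⟩
    have hcoe : (g : ∀ _ : V, ℂ) = upF β f := rfl
    have h2 := hL g
    rw [hcoe, dn_up hβ] at h2
    have e1 : wnormSq β (gammaMap par depth lam φ f) = ‖L g‖ ^ 2 := by
      rw [wnormSq_eq hβ, lp_norm_sq, ← h2]
    have e2 : wnormSq β f = ‖g‖ ^ 2 := by
      rw [wnormSq_eq hβ, lp_norm_sq, hcoe]
    rw [e1, e2, ← mul_pow]
    exact pow_le_pow_left₀ (norm_nonneg _) (L.le_opNorm g) 2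
  · rintro C ⟨hC0, hC⟩
    refine L.opNorm_le_bound hC0 fun g => ?_
    set f : V → ℂ := dnF β (g : ∀ _ : V, ℂ)
    have hup : upF β f = (g : ∀ _ : V, ℂ) := up_dn hβ _
    have hf : MemL2 β f := by
      rw [memL2_iff hβ, hup]
      exact lp.memℓp g
    have h1 : ‖L g‖ ^ 2 = wnormSq β (gammaMap par depth lam φ f) := by
      rw [wnormSq_eq hβ, lp_norm_sq, hL g]
    have h2 : ‖g‖ ^ 2 = wnormSq β f := by
      rw [wnormSq_eq hβ, hup, lp_norm_sq]
    refine le_of_sq_le_sq' (norm_nonneg _) (mul_nonneg hC0 (norm_nonneg _)) ?_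
    rw [mul_pow, h1, h2]
    exact hC f hf

include hβ in
lemma opNorm_eq_rep {φ : ℕ → ℂ} {L : lp (fun _ : V => ℂ) 2 →L[ℂ] lp (fun _ : V => ℂ) 2}
    (hL : RepOp par depth β lam φ L) :
    opNorm β (gammaMap par depth lam φ) = ‖L‖ :=
  (isLeast_rep par depth β lam hβ hL).csInf_eq

lemma rep_sub {φ ψ : ℕ → ℂ} {L₁ L₂ : lp (fun _ : V => ℂ) 2 →L[ℂ] lp (fun _ : V => ℂ) 2}
    (h₁ : RepOp par depth β lam φ L₁) (h₂ : RepOp par depth β lam ψ L₂) :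
    RepOp par depth β lam (fun k => φ k - ψ k) (L₁ - L₂) := by
  intro g
  funext v
  have : ((L₁ - L₂) g : ∀ _ : V, ℂ) v = (L₁ g : ∀ _ : V, ℂ) v - (L₂ g : ∀ _ : V, ℂ) v := by
    simp
  rw [this, h₁ g, h₂ g]
  simp only [upF, gammaMap_symbol_sub]
  ring

include hβ in
lemma rep_comp {root : V} (hdepth0 : depth root = 0)
    (hdepth : ∀ v, v ≠ root → depth v = depth (par v) + 1)
    {φ ψ : ℕ → ℂ} {L₁ L₂ : lp (fun _ : V => ℂ) 2 →L[ℂ] lp (fun _ : V => ℂ) 2}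
    (h₁ : RepOp par depth β lam φ L₁) (h₂ : RepOp par depth β lam ψ L₂) :
    RepOp par depth β lam (cauchyMul φ ψ) (L₁.comp L₂) := by
  intro g
  have : (L₁.comp L₂) g = L₁ (L₂ g) := rfl
  rw [this, h₁ (L₂ g)]
  have hdn : dnF β ((L₂ g : ∀ _ : V, ℂ)) = gammaMap par depth lam ψ (dnF β (g : ∀ _ : V, ℂ)) := by
    rw [h₂ g, dn_up hβ]
  rw [hdn, gammaMap_comp root par depth lam hdepth0 hdepth]

lemma rep_unique {φ : ℕ → ℂ} {L₁ L₂ : lp (fun _ : V => ℂ) 2 →L[ℂ] lp (fun _ : V => ℂ) 2}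
    (h₁ : RepOp par depth β lam φ L₁) (h₂ : RepOp par depth β lam φ L₂) : L₁ = L₂ := by
  ext g : 1
  exact lp.ext ((h₁ g).trans (h₂ g).symm)

end Stmt7Aux3
section Stmt7Aux4
set_option linter.unusedSectionVars false
set_option maxHeartbeats 1000000
variable {V : Type*} [DecidableEq V]
variable (par : V → V) (depth : V → ℕ) (β lam : V → ℝ)

lemma lp_coord_tendsto {u : ℕ → lp (fun _ : V => ℂ) 2} {x : lp (fun _ : V => ℂ) 2}
    (h : Filter.Tendsto u Filter.atTop (nhds x)) (w : V) :
    Filter.Tendsto (fun n => (u n : ∀ _ : V, ℂ) w) Filter.atTop (nhds ((x : ∀ _ : V, ℂ) w)) := by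
  rw [tendsto_iff_norm_sub_tendsto_zero] at h ⊢
  refine squeeze_zero (fun n => norm_nonneg _) (fun n => ?_) h
  have := lp.norm_apply_le_norm (by norm_num : (2:ℝ≥0∞) ≠ 0) (u n - x) w
  simpa using this

variable (hβ : ∀ v, 0 < β v)

include hβ in
lemma rep_exists {φ : ℕ → ℂ} (hφ : Mult par depth β lam φ) :
    ∃ L, RepOp par depth β lam φ L := by
  have hmem : ∀ g : lp (fun _ : V => ℂ) 2,
      Memℓp (upF β (gammaMap par depth lam φ (dnF β (g : ∀ _ : V, ℂ)))) 2 := by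
    intro g
    refine (memL2_iff hβ _).1 (hφ _ ?_)
    rw [memL2_iff hβ, up_dn hβ]
    exact lp.memℓp g
  have dnF_add : ∀ a b : ∀ _ : V, ℂ, dnF β (a + b) = dnF β a + dnF β b := by
    intro a b; funext v; simp [dnF, add_div]
  have dnF_smul : ∀ (c : ℂ) (a : ∀ _ : V, ℂ), dnF β (c • a) = c • dnF β a := by
    intro c a; funext v; simp [dnF, mul_div_assoc]
  set T : lp (fun _ : V => ℂ) 2 →ₗ[ℂ] lp (fun _ : V => ℂ) 2 :=
    { toFun := fun g => ⟨upF β (gammaMap par depth lam φ (dnF β (g : ∀ _ : V, ℂ))), hmem g⟩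
      map_add' := by
        intro g₁ g₂
        refine lp.ext (funext fun v => ?_)
        have : ((g₁ + g₂ : lp (fun _ : V => ℂ) 2) : ∀ _ : V, ℂ) = (g₁ : ∀ _ : V, ℂ) + g₂ :=
          lp.coeFn_add g₁ g₂
        simp only [this, dnF_add, gammaMap_fun_add par depth lam, upF, Pi.add_apply, lp.coeFn_add]
        ring
      map_smul' := by
        intro c g
        refine lp.ext (funext fun v => ?_)
        have : ((c • g : lp (fun _ : V => ℂ) 2) : ∀ _ : V, ℂ) = c • (g : ∀ _ : V, ℂ) :=
          lp.coeFn_smul c g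
        simp only [this, dnF_smul, gammaMap_fun_smul par depth lam, upF, Pi.smul_apply,
          lp.coeFn_smul, RingHom.id_apply, smul_eq_mul]
        ring } with hT
  have hTcoe : ∀ g : lp (fun _ : V => ℂ) 2,
      (T g : ∀ _ : V, ℂ) = upF β (gammaMap par depth lam φ (dnF β (g : ∀ _ : V, ℂ))) :=
    fun g => rfl
  have hcont : Continuous T := by
    apply T.continuous_of_seq_closed_graph
    intro u x y hu hTu
    refine lp.ext (funext fun v => ?_)
    have h1 : Filter.Tendsto (fun n => (T (u n) : ∀ _ : V, ℂ) v) Filter.atTop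
        (nhds ((y : ∀ _ : V, ℂ) v)) := lp_coord_tendsto hTu v
    have h2 : Filter.Tendsto (fun n => (T (u n) : ∀ _ : V, ℂ) v) Filter.atTop
        (nhds ((T x : ∀ _ : V, ℂ) v)) := by
      simp only [hTcoe, upF, gammaMap, dnF]
      apply Filter.Tendsto.const_mul
      apply tendsto_finset_sum
      intro k _
      exact ((lp_coord_tendsto hu (par^[k] v)).div_const _).const_mul _
    exact tendsto_nhds_unique h1 h2
  exact ⟨⟨T, hcont⟩, fun g => rfl⟩

variable (root : V)

lemma exists_depth (hdepth0 : depth root = 0)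
    (hdepth : ∀ v, v ≠ root → depth v = depth (par v) + 1)
    (hleafless : ∀ u : V, ∃ v : V, v ≠ root ∧ par v = u) (k : ℕ) :
    ∃ v : V, depth v = k := by
  induction k with
  | zero => exact ⟨root, hdepth0⟩
  | succ k ih =>
    obtain ⟨u, hu⟩ := ih
    obtain ⟨v, hv, hpar⟩ := hleafless u
    exact ⟨v, by rw [hdepth v hv, hpar, hu]⟩

lemma memL2_eVec : MemL2 β (eVec root) := by
  refine summable_of_ne_finset_zero (s := {root}) fun b hb => ?_
  simp only [Finset.mem_singleton] at hb
  simp [eVec, hb]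

lemma wnormSq_eVec : wnormSq β (eVec root) = β root := by
  unfold wnormSq
  rw [tsum_eq_single root]
  · simp [eVec]
  · intro w hw
    simp [eVec, hw]

lemma gamma_eVec (hdepth0 : depth root = 0)
    (hdepth : ∀ v, v ≠ root → depth v = depth (par v) + 1)
    (hreach : ∀ v, par^[depth v] v = root) (φ : ℕ → ℂ) (v : V) :
    gammaMap par depth lam φ (eVec root) v =
      ((lamProd par lam (depth v) v : ℝ) : ℂ) * φ (depth v) := by
  unfold gammaMap
  rw [Finset.sum_eq_single_of_mem (depth v) (by simp)]
  · rw [show eVec root (par^[depth v] v) = 1 from by simp [eVec, hreach v], mul_one]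
  · intro k hk hkne
    rw [Finset.mem_range] at hk
    have h0 : eVec root (par^[k] v) = 0 := by
      simp only [eVec, ite_eq_right_iff]
      intro h
      exact absurd (iterate_root_unique root par depth hdepth0 hdepth (by omega) h) hkne
    simp [h0]

include hβ in
lemma symbol_bound (hdepth0 : depth root = 0)
    (hdepth : ∀ v, v ≠ root → depth v = depth (par v) + 1)
    (hreach : ∀ v, par^[depth v] v = root)
    (hleafless : ∀ u : V, ∃ v : V, v ≠ root ∧ par v = u)
    (hlam : ∀ v, v ≠ root → 0 < lam v) (k : ℕ) :
    ∃ c : ℝ, 0 ≤ c ∧ ∀ (φ : ℕ → ℂ) (L : lp (fun _ : V => ℂ) 2 →L[ℂ] lp (fun _ : V => ℂ) 2),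
      RepOp par depth β lam φ L → ‖φ k‖ ≤ c * ‖L‖ := by
  obtain ⟨v, hv⟩ := exists_depth par depth root hdepth0 hdepth hleafless k
  set P : ℝ := lamProd par lam (depth v) v with hPdef
  have hP : 0 < P := lamProd_pos root par depth lam hdepth0 hdepth hlam le_rfl
  have hden : 0 < β v * P ^ 2 := mul_pos (hβ v) (pow_pos hP 2)
  refine ⟨Real.sqrt (β root / (β v * P ^ 2)), Real.sqrt_nonneg _, ?_⟩
  intro φ L hL
  have hMult := mult_of_rep par depth β lam hβ hL
  have hmemE : MemL2 β (eVec root) := memL2_eVec β root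
  have hG : MemL2 β (gammaMap par depth lam φ (eVec root)) := hMult _ hmemE
  have hle := (isLeast_rep par depth β lam hβ hL).1.2 (eVec root) hmemE
  rw [wnormSq_eVec] at hle
  have hterm : β v * ‖gammaMap par depth lam φ (eVec root) v‖ ^ 2
      ≤ wnormSq β (gammaMap par depth lam φ (eVec root)) :=
    Summable.le_tsum hG v fun w _ => mul_nonneg (hβ w).le (sq_nonneg _)
  rw [gamma_eVec par depth lam root hdepth0 hdepth hreach] at hterm
  have hnorm : ‖((P : ℝ) : ℂ) * φ (depth v)‖ ^ 2 = P ^ 2 * ‖φ (depth v)‖ ^ 2 := by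
    rw [norm_mul, Complex.norm_real, Real.norm_eq_abs, abs_of_pos hP, mul_pow]
  rw [hnorm, hv] at hterm
  have hkey : β v * P ^ 2 * ‖φ k‖ ^ 2 ≤ ‖L‖ ^ 2 * β root := by
    calc β v * P ^ 2 * ‖φ k‖ ^ 2 = β v * (P ^ 2 * ‖φ k‖ ^ 2) := by ring
    _ ≤ wnormSq β (gammaMap par depth lam φ (eVec root)) := hterm
    _ ≤ ‖L‖ ^ 2 * β root := hle
  refine le_of_sq_le_sq' (norm_nonneg _) (mul_nonneg (Real.sqrt_nonneg _) (norm_nonneg _)) ?_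
  rw [mul_pow, Real.sq_sqrt (le_of_lt (div_pos (hβ root) hden))]
  rw [div_mul_eq_mul_div, le_div_iff₀ hden]
  nlinarith [hkey]

end Stmt7Aux4

set_option maxHeartbeats 1000000 in
set_option synthInstance.maxHeartbeats 400000 in
/-- the multiplier algebra M(T_β,λ) with the Cauchy product is a commutative
unital Banach algebra: the unit χ_{{0}} is a multiplier, the Cauchy product of multipliers
is a multiplier with submultiplicative norm, the Cauchy product is commutative, and any
Cauchy sequence of multipliers converges in the multiplier norm to a multiplier. -/
theorem stmt7 {V : Type*} [Countable V] [Infinite V] [DecidableEq V]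
    (root : V) (par : V → V) (depth : V → ℕ)
    (hdepth0 : depth root = 0)
    (hdepth : ∀ v, v ≠ root → depth v = depth (par v) + 1)
    (hreach : ∀ v, par^[depth v] v = root)
    (hleafless : ∀ u : V, ∃ v : V, v ≠ root ∧ par v = u)
    (β : V → ℝ) (hβ : ∀ v, 0 < β v)
    (lam : V → ℝ) (hlam : ∀ v, v ≠ root → 0 < lam v)
    (hbdd : ∃ C : ℝ, ∀ f : V → ℂ, MemL2 β f →
        MemL2 β (shiftMapR root par lam f) ∧
        wnormSq β (shiftMapR root par lam f) ≤ C * wnormSq β f) :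
    (Mult par depth β lam (fun k => if k = 0 then 1 else 0))
    ∧ (∀ φ ψ : ℕ → ℂ, Mult par depth β lam φ → Mult par depth β lam ψ →
        Mult par depth β lam (cauchyMul φ ψ)
        ∧ opNorm β (gammaMap par depth lam (cauchyMul φ ψ))
            ≤ opNorm β (gammaMap par depth lam φ) * opNorm β (gammaMap par depth lam ψ))
    ∧ (∀ φ ψ : ℕ → ℂ, cauchyMul φ ψ = cauchyMul ψ φ)
    ∧ (∀ Φ : ℕ → ℕ → ℂ, (∀ n, Mult par depth β lam (Φ n)) →
        (∀ ε : ℝ, 0 < ε → ∃ N : ℕ, ∀ m n : ℕ, N ≤ m → N ≤ n →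
          opNorm β (gammaMap par depth lam (fun k => Φ m k - Φ n k)) ≤ ε) →
        ∃ ψ : ℕ → ℂ, Mult par depth β lam ψ ∧
          Filter.Tendsto
            (fun n => opNorm β (gammaMap par depth lam (fun k => ψ k - Φ n k)))
            Filter.atTop (nhds 0)) := by
  classical
  refine ⟨?_, ?_, ?_, ?_⟩
  · -- unit
    intro f hf
    rw [gammaMap_one par depth lam f]
    exact hf
  · -- product
    intro φ ψ hφ hψ
    obtain ⟨Lφ, hLφ⟩ := rep_exists par depth β lam hβ hφ
    obtain ⟨Lψ, hLψ⟩ := rep_exists par depth β lam hβ hψ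
    have hcomp := rep_comp par depth β lam hβ hdepth0 hdepth hLφ hLψ
    refine ⟨mult_of_rep par depth β lam hβ hcomp, ?_⟩
    rw [opNorm_eq_rep par depth β lam hβ hcomp, opNorm_eq_rep par depth β lam hβ hLφ,
      opNorm_eq_rep par depth β lam hβ hLψ]
    exact ContinuousLinearMap.opNorm_comp_le Lφ Lψ
  · -- commutativity of the Cauchy product
    intro φ ψ
    funext k
    unfold cauchyMul
    rw [← Finset.sum_range_reflect (fun j => φ j * ψ (k - j)) (k + 1)]
    refine Finset.sum_congr rfl fun j hj => ?_
    rw [Finset.mem_range] at hj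
    have h1 : k + 1 - 1 - j = k - j := by omega
    have h2 : k - (k - j) = j := by omega
    rw [h1, h2, mul_comm]
  · -- completeness
    intro Φ hΦ hCauchy
    choose L hLrep using fun n => rep_exists par depth β lam hβ (hΦ n)
    have hdiff : ∀ m n, RepOp par depth β lam (fun k => Φ m k - Φ n k) (L m - L n) :=
      fun m n => rep_sub par depth β lam (hLrep m) (hLrep n)
    have hC' : ∀ ε : ℝ, 0 < ε → ∃ N, ∀ m n, N ≤ m → N ≤ n → ‖L m - L n‖ ≤ ε := by
      intro ε hε
      obtain ⟨N, hN⟩ := hCauchy ε hε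
      refine ⟨N, fun m n hm hn => ?_⟩
      have := hN m n hm hn
      rwa [opNorm_eq_rep par depth β lam hβ (hdiff m n)] at this
    have hCauchySeq : CauchySeq L := by
      rw [Metric.cauchySeq_iff]
      intro ε hε
      obtain ⟨N, hN⟩ := hC' (ε / 2) (by linarith)
      refine ⟨N, fun m hm n hn => ?_⟩
      have := hN m n hm hn
      rw [dist_eq_norm]
      linarith
    obtain ⟨Linf, hLinf⟩ := cauchySeq_tendsto_of_complete hCauchySeq
    have hsym : ∀ k, ∃ z : ℂ, Filter.Tendsto (fun n => Φ n k) Filter.atTop (nhds z) := by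
      intro k
      obtain ⟨c, hc0, hc⟩ :=
        symbol_bound par depth β lam hβ root hdepth0 hdepth hreach hleafless hlam k
      refine cauchySeq_tendsto_of_complete ?_
      rw [Metric.cauchySeq_iff]
      intro ε hε
      obtain ⟨N, hN⟩ := hC' (ε / (2 * (c + 1))) (by positivity)
      refine ⟨N, fun m hm n hn => ?_⟩
      rw [dist_eq_norm]
      have hb : ‖Φ m k - Φ n k‖ ≤ c * ‖L m - L n‖ := hc _ _ (hdiff m n)
      have h2 := hN m n hm hn
      have h3 : c * ‖L m - L n‖ ≤ c * (ε / (2 * (c + 1))) :=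
        mul_le_mul_of_nonneg_left h2 hc0
      have h4 : c * (ε / (2 * (c + 1))) < ε := by
        rw [mul_div_assoc']
        rw [div_lt_iff₀ (by positivity)]
        nlinarith
      linarith
    choose ψ hψ using hsym
    have hRepInf : RepOp par depth β lam ψ Linf := by
      intro g
      funext v
      have hA : Filter.Tendsto (fun n => L n g) Filter.atTop (nhds (Linf g)) := by
        rw [tendsto_iff_norm_sub_tendsto_zero]
        refine squeeze_zero (g := fun n => ‖L n - Linf‖ * ‖g‖) (fun n => norm_nonneg _) (fun n => ?_) ?_
        · have := (L n - Linf).le_opNorm g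
          simpa using this
        · have h0 : Filter.Tendsto (fun n => ‖L n - Linf‖) Filter.atTop (nhds 0) := by
            rw [tendsto_iff_norm_sub_tendsto_zero] at hLinf
            exact hLinf
          simpa using h0.mul_const ‖g‖
      have h1 := lp_coord_tendsto hA v
      have h2 : Filter.Tendsto (fun n => (L n g : ∀ _ : V, ℂ) v) Filter.atTop
          (nhds (upF β (gammaMap par depth lam ψ (dnF β (g : ∀ _ : V, ℂ))) v)) := by
        have heq : ∀ n, (L n g : ∀ _ : V, ℂ) v
            = upF β (gammaMap par depth lam (Φ n) (dnF β (g : ∀ _ : V, ℂ))) v :=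
          fun n => by rw [hLrep n g]
        simp only [heq, upF, gammaMap]
        apply Filter.Tendsto.const_mul
        apply tendsto_finset_sum
        intro k _
        exact ((hψ k).const_mul _).mul_const _
      exact tendsto_nhds_unique h1 h2
    refine ⟨ψ, mult_of_rep par depth β lam hβ hRepInf, ?_⟩
    have heq : ∀ n, opNorm β (gammaMap par depth lam (fun k => ψ k - Φ n k)) = ‖Linf - L n‖ :=
      fun n => opNorm_eq_rep par depth β lam hβ (rep_sub par depth β lam hRepInf (hLrep n))
    simp only [heq]
    rw [tendsto_iff_norm_sub_tendsto_zero] at hLinf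
    exact Filter.Tendsto.congr (fun n => norm_sub_rev _ _) hLinf

end
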